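/- arXiv:1307.4024 — 2 statements merged into one kernel-verified Lean document; each statement's English description precedes it below -/
import Mathlib

section
/- For every real p ≥ 1 and all real numbers m₁, m₂ > 0, γ_p is a metric on M(m₁,m₂) = M(m₁) × M(m₂): for all 𝛍, 𝛎, 𝛈 ∈ M(m₁,m₂), γ_p(𝛍,𝛎) is finite and nonnegative, γ_p(𝛍,𝛎) = γ_p(𝛎,𝛍), γ_p(𝛍,𝛈) ≤ γ_p(𝛍,𝛎) + γ_p(𝛎,𝛈), and γ_p(𝛍,𝛎) = 0 if and only if 𝛍 = 𝛎. -/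
open MeasureTheory Set Filter

noncomputable section

/-- `ℝ^d` with the Euclidean norm. -/
abbrev Euc (d : ℕ) := EuclideanSpace ℝ (Fin d)

/-- The bounded metric `ρ(x,y) = min (1, ‖x - y‖)`. -/
def rho {d : ℕ} (x y : Euc d) : ℝ := min 1 (dist x y)

/-- `M(m)`: finite nonnegative Borel measures on `ℝ^d` with total mass `m`. -/
def Mset (d : ℕ) (m : ℝ) : Set (Measure (Euc d)) :=
  {μ | μ Set.univ = ENNReal.ofReal m}

/-- `H(μ,ν)`: joint representations of the pair `(μ,ν)`, where `μ, ν ∈ M(m)`. -/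
def Hrep {d : ℕ} (m : ℝ) (μ ν : Measure (Euc d)) : Set (Measure (Euc d × Euc d)) :=
  {Q | ∀ A : Set (Euc d), MeasurableSet A →
      Q (A ×ˢ Set.univ) = ENNReal.ofReal m * μ A ∧
      Q (Set.univ ×ˢ A) = ENNReal.ofReal m * ν A}

/-- The Wasserstein distance `W_p` on `M(m)` associated with the metric `ρ`. -/
def Wp {d : ℕ} (p m : ℝ) (μ ν : Measure (Euc d)) : ℝ :=
  sInf ((fun Q : Measure (Euc d × Euc d) => ∫ z, rho z.1 z.2 ^ p ∂Q) '' Hrep m μ ν) ^ (1 / p)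

/-- The metric `γ_p` on `M(m₁,m₂) = M(m₁) × M(m₂)`. -/
def gammap {d : ℕ} (p m₁ m₂ : ℝ) (x y : Measure (Euc d) × Measure (Euc d)) : ℝ :=
  (Wp p m₁ x.1 y.1 ^ p + Wp p m₂ x.2 y.2 ^ p) ^ (1 / p)


/-!
`W_p(μ, ν)` is the `p`-Wasserstein distance, for the bounded metric `ρ`, between the rescaled
measures `m • μ` and `m • ν`: the couplings in `H(μ, ν)` are exactly the measures with marginals
`m • μ` and `m • ν`. Swapping the coordinates of a coupling gives symmetry, and the diagonal
coupling gives `W_p(μ, μ) = 0`. For the triangle inequality, two near-optimal couplings are glued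
along their common marginal by disintegrating one of them, and Minkowski's inequality in `L^p` of
the glued measure compares the three costs. If `W_p(μ, ν) = 0`, Markov's inequality yields
couplings giving mass at most `ε` to `{ε ≤ ρ}`, so the Lévy–Prokhorov distance between `m • μ`
and `m • ν` vanishes, which forces `μ = ν`. Finally `γ_p` is the `ℓ^p` combination of two such
distances, and Minkowski's inequality in `ℝ²` carries the triangle inequality over.
-/

open Metric ProbabilityTheory

namespace MeasureTheory

namespace Measure

variable {α β γ : Type*} [MeasurableSpace α] [MeasurableSpace β] [MeasurableSpace γ]
  [StandardBorelSpace γ] [Nonempty γ]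

lemma map_compProd_prodMkLeft_condKernel (Q₁ : Measure (α × β)) [IsFiniteMeasure Q₁]
    (Q₂ : Measure (β × γ)) [IsFiniteMeasure Q₂] (h : Q₁.snd = Q₂.fst) :
    (Q₁ ⊗ₘ Kernel.prodMkLeft α Q₂.condKernel).map (fun w => (w.1.2, w.2)) = Q₂ := by
  have hf : Measurable fun w : (α × β) × γ => (w.1.2, w.2) := by fun_prop
  ext s hs
  conv_rhs => rw [← Q₂.disintegrate Q₂.condKernel]
  rw [map_apply hf hs, compProd_apply (hf hs), compProd_apply hs, ← h, Measure.snd,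
    lintegral_map (Kernel.measurable_kernel_prodMk_left hs) measurable_snd]
  rfl

theorem exists_gluing (Q₁ : Measure (α × β)) [IsFiniteMeasure Q₁] (Q₂ : Measure (β × γ))
    [IsFiniteMeasure Q₂] (h : Q₁.snd = Q₂.fst) :
    ∃ R : Measure ((α × β) × γ), IsFiniteMeasure R ∧
      R.fst = Q₁ ∧ R.map (fun w => (w.1.2, w.2)) = Q₂ :=
  ⟨_, inferInstance, fst_compProd _ _, map_compProd_prodMkLeft_condKernel Q₁ Q₂ h⟩

end Measure

section LevyProkhorov

variable {X : Type*} [PseudoMetricSpace X] [MeasurableSpace X]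

lemma Measure.fst_le_snd_thickening_add (Q : Measure (X × X)) (ε : ℝ) {B : Set X}
    (hB : MeasurableSet B) :
    Q.fst B ≤ Q.snd (thickening ε B) + Q {z | ε ≤ dist z.1 z.2} := by
  have hsub : B ×ˢ univ ⊆ Prod.snd ⁻¹' thickening ε B ∪ {z | ε ≤ dist z.1 z.2} := by
    rintro ⟨x, y⟩ ⟨hx, -⟩
    by_cases hxy : ε ≤ dist x y
    · exact Or.inr hxy
    · exact Or.inl (mem_thickening_iff.2 ⟨x, hx, by rw [dist_comm]; exact not_le.1 hxy⟩)
  calc Q.fst B = Q (B ×ˢ univ) := by rw [Measure.fst_apply hB, prod_univ]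
    _ ≤ Q (Prod.snd ⁻¹' thickening ε B) + Q {z | ε ≤ dist z.1 z.2} :=
      (measure_mono hsub).trans (measure_union_le _ _)
    _ ≤ Q.snd (thickening ε B) + Q {z | ε ≤ dist z.1 z.2} :=
      add_le_add (Measure.le_map_apply measurable_snd.aemeasurable _) le_rfl

lemma levyProkhorovEDist_fst_snd_le (Q : Measure (X × X)) {ε : ℝ}
    (hQ : Q {z | ε ≤ dist z.1 z.2} ≤ ENNReal.ofReal ε) :
    levyProkhorovEDist Q.fst Q.snd ≤ ENNReal.ofReal ε := by
  have hswap : Q.map Prod.swap {z | ε ≤ dist z.1 z.2} ≤ ENNReal.ofReal ε := by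
    rw [show Prod.swap = ⇑(MeasurableEquiv.prodComm (α := X) (β := X)) from rfl,
      MeasurableEquiv.map_apply]
    simpa [MeasurableEquiv.prodComm, dist_comm] using hQ
  refine levyProkhorovEDist_le_of_forall _ _ _ fun δ B hδ hδtop hB => ?_
  have hεδ : ε ≤ δ.toReal := (ENNReal.ofReal_le_iff_le_toReal hδtop.ne).1 hδ.le
  constructor
  · calc Q.fst B ≤ Q.snd (thickening ε B) + Q {z | ε ≤ dist z.1 z.2} :=
        Q.fst_le_snd_thickening_add ε hB
      _ ≤ Q.snd (thickening δ.toReal B) + δ :=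
        add_le_add (measure_mono (thickening_mono hεδ B)) (hQ.trans hδ.le)
  · calc Q.snd B = (Q.map Prod.swap).fst B := by rw [Measure.fst_map_swap]
      _ ≤ (Q.map Prod.swap).snd (thickening ε B) + Q.map Prod.swap {z | ε ≤ dist z.1 z.2} :=
        (Q.map Prod.swap).fst_le_snd_thickening_add ε hB
      _ ≤ Q.fst (thickening δ.toReal B) + δ := by
        rw [Measure.snd_map_swap]
        exact add_le_add (measure_mono (thickening_mono hεδ B)) (hswap.trans hδ.le)

lemma eq_of_levyProkhorovEDist_eq_zero [BorelSpace X] {μ ν : Measure X} [IsFiniteMeasure μ]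
    [IsFiniteMeasure ν] (h : levyProkhorovEDist μ ν = 0) : μ = ν := by
  have hclosed {s : Set X} (hs : IsClosed s) : μ s = ν s :=
    measure_eq_measure_of_levyProkhorovEDist_eq_zero_of_isClosed h hs
      ⟨1, one_pos, measure_ne_top _ _⟩ ⟨1, one_pos, measure_ne_top _ _⟩
  refine ext_of_generate_finite _ ?_ isPiSystem_isClosed (fun s hs => hclosed hs)
    (hclosed isClosed_univ)
  rw [BorelSpace.measurable_eq (α := X), borel_eq_generateFrom_isClosed]

end LevyProkhorov

end MeasureTheory

variable {d : ℕ}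

section Rho

lemma rho_nonneg (x y : Euc d) : 0 ≤ rho x y := le_min zero_le_one dist_nonneg

lemma rho_le_one (x y : Euc d) : rho x y ≤ 1 := min_le_left _ _

lemma rho_comm (x y : Euc d) : rho x y = rho y x := by rw [rho, rho, dist_comm]

lemma rho_self (x : Euc d) : rho x x = 0 := by simp [rho]

lemma rho_triangle (x y z : Euc d) : rho x z ≤ rho x y + rho y z := by
  calc rho x z ≤ min 1 (dist x y + dist y z) := min_le_min_left 1 (dist_triangle x y z)
    _ ≤ rho x y + rho y z := by
      have hxy : 0 ≤ dist x y := dist_nonneg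
      have hyz : 0 ≤ dist y z := dist_nonneg
      unfold rho
      rcases le_total 1 (dist x y) with h₁ | h₁ <;> rcases le_total 1 (dist y z) with h₂ | h₂ <;>
        simp only [min_eq_left, min_eq_right, h₁, h₂] <;>
        linarith [min_le_left 1 (dist x y + dist y z), min_le_right 1 (dist x y + dist y z)]

lemma le_rho_iff {e : ℝ} (he : e ≤ 1) {x y : Euc d} : e ≤ rho x y ↔ e ≤ dist x y := by
  simp [rho, he]

lemma continuous_rho : Continuous fun z : Euc d × Euc d => rho z.1 z.2 :=
  continuous_const.min (continuous_fst.dist continuous_snd)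

end Rho

def transportCost (p : ℝ) (Q : Measure (Euc d × Euc d)) : ℝ := ∫ z, rho z.1 z.2 ^ p ∂Q

lemma Wp_eq_sInf_transportCost (p m : ℝ) (μ ν : Measure (Euc d)) :
    Wp p m μ ν = sInf (transportCost p '' Hrep m μ ν) ^ (1 / p) := rfl

section TransportCost

variable {p : ℝ}

lemma measurable_rho_rpow : Measurable fun z : Euc d × Euc d => rho z.1 z.2 ^ p :=
  continuous_rho.measurable.pow_const p

lemma integrable_rho_rpow (hp : 0 ≤ p) (Q : Measure (Euc d × Euc d)) [IsFiniteMeasure Q] :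
    Integrable (fun z : Euc d × Euc d => rho z.1 z.2 ^ p) Q := by
  refine Integrable.of_bound measurable_rho_rpow.aestronglyMeasurable 1 (ae_of_all _ fun z => ?_)
  rw [Real.norm_of_nonneg (Real.rpow_nonneg (rho_nonneg _ _) p)]
  exact Real.rpow_le_one (rho_nonneg _ _) (rho_le_one _ _) hp

lemma memLp_rho (q : ENNReal) (Q : Measure (Euc d × Euc d)) [IsFiniteMeasure Q] :
    MemLp (fun z : Euc d × Euc d => rho z.1 z.2) q Q := by
  refine .of_bound continuous_rho.aestronglyMeasurable 1 (ae_of_all _ fun z => ?_)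
  rw [Real.norm_of_nonneg (rho_nonneg _ _)]
  exact rho_le_one _ _

lemma transportCost_nonneg (Q : Measure (Euc d × Euc d)) : 0 ≤ transportCost p Q :=
  integral_nonneg fun z => Real.rpow_nonneg (rho_nonneg z.1 z.2) p

lemma transportCost_map_swap (Q : Measure (Euc d × Euc d)) :
    transportCost p (Q.map Prod.swap) = transportCost p Q := by
  rw [transportCost, integral_map measurable_swap.aemeasurable
    measurable_rho_rpow.aestronglyMeasurable]
  simp_rw [Prod.fst_swap, Prod.snd_swap, rho_comm]
  rfl

lemma transportCost_map_diag (hp : p ≠ 0) (μ : Measure (Euc d)) :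
    transportCost p (μ.map fun x => (x, x)) = 0 := by
  rw [transportCost, integral_map (by fun_prop) measurable_rho_rpow.aestronglyMeasurable]
  simp [rho_self, Real.zero_rpow hp]

lemma transportCost_rpow_inv_eq_eLpNorm (hp : 0 < p) (Q : Measure (Euc d × Euc d))
    [IsFiniteMeasure Q] :
    transportCost p Q ^ (1 / p) =
      (eLpNorm (fun z : Euc d × Euc d => rho z.1 z.2) (ENNReal.ofReal p) Q).toReal := by
  rw [(memLp_rho _ Q).eLpNorm_eq_integral_rpow_norm (by simpa using hp) ENNReal.ofReal_ne_top,
    ENNReal.toReal_ofReal (by positivity), ENNReal.toReal_ofReal hp.le, one_div]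
  simp [transportCost, abs_of_nonneg (rho_nonneg _ _)]

lemma transportCost_map_rpow_inv_le (hp : 1 ≤ p) (R : Measure ((Euc d × Euc d) × Euc d))
    [IsFiniteMeasure R] :
    transportCost p (R.map fun w => (w.1.1, w.2)) ^ (1 / p) ≤
      transportCost p R.fst ^ (1 / p) +
        transportCost p (R.map fun w => (w.1.2, w.2)) ^ (1 / p) := by
  set r : Euc d × Euc d → ℝ := fun z => rho z.1 z.2
  have hmap {f : (Euc d × Euc d) × Euc d → Euc d × Euc d} (hf : Measurable f) :
      eLpNorm r (ENNReal.ofReal p) (R.map f) = eLpNorm (r ∘ f) (ENNReal.ofReal p) R :=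
    eLpNorm_map_measure continuous_rho.aestronglyMeasurable hf.aemeasurable
  simp only [transportCost_rpow_inv_eq_eLpNorm (zero_lt_one.trans_le hp), Measure.fst]
  refine ENNReal.toReal_le_add ?_ (memLp_rho _ _).eLpNorm_ne_top (memLp_rho _ _).eLpNorm_ne_top
  rw [hmap (by fun_prop), hmap measurable_fst, hmap (by fun_prop)]
  calc eLpNorm (r ∘ fun w => (w.1.1, w.2)) (ENNReal.ofReal p) R
      ≤ eLpNorm (r ∘ Prod.fst + r ∘ fun w => (w.1.2, w.2)) (ENNReal.ofReal p) R :=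
        eLpNorm_mono_real fun w => by
          simpa [r, Real.norm_of_nonneg (rho_nonneg _ _)] using rho_triangle _ _ _
    _ ≤ _ := eLpNorm_add_le (continuous_rho.comp (by fun_prop)).aestronglyMeasurable
        (continuous_rho.comp (by fun_prop)).aestronglyMeasurable (by simpa using hp)

lemma measure_le_rho_le (hp : 0 < p) (Q : Measure (Euc d × Euc d)) [IsFiniteMeasure Q]
    {e : ℝ} (he : 0 < e) :
    Q {z | e ≤ rho z.1 z.2} ≤ ENNReal.ofReal (transportCost p Q / e ^ p) := by
  have hep : 0 < e ^ p := Real.rpow_pos_of_pos he p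
  have hmarkov := mul_meas_ge_le_integral_of_nonneg (f := fun z : Euc d × Euc d => rho z.1 z.2 ^ p)
    (ae_of_all _ fun z => Real.rpow_nonneg (rho_nonneg _ _) p) (integrable_rho_rpow hp.le Q) (e ^ p)
  have hsub : {z : Euc d × Euc d | e ≤ rho z.1 z.2} ⊆ {z | e ^ p ≤ rho z.1 z.2 ^ p} :=
    fun z hz => Real.rpow_le_rpow he.le hz hp.le
  rw [← ofReal_measureReal (measure_ne_top Q _)]
  refine ENNReal.ofReal_le_ofReal ((le_div_iff₀' hep).2 ?_)
  exact (mul_le_mul_of_nonneg_left (measureReal_mono hsub) hep.le).trans hmarkov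

end TransportCost

section Hrep

variable {m : ℝ} {μ ν : Measure (Euc d)}

lemma mem_Hrep_iff {Q : Measure (Euc d × Euc d)} :
    Q ∈ Hrep m μ ν ↔ Q.fst = ENNReal.ofReal m • μ ∧ Q.snd = ENNReal.ofReal m • ν := by
  simp only [Hrep, Measure.ext_iff, ← forall_and, Measure.smul_apply, smul_eq_mul, prod_univ,
    univ_prod]
  exact forall₂_congr fun A hA => by rw [Measure.fst_apply hA, Measure.snd_apply hA]

lemma isFiniteMeasure_of_mem_Mset (hμ : μ ∈ Mset d m) : IsFiniteMeasure μ :=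
  ⟨hμ.symm ▸ ENNReal.ofReal_lt_top⟩

lemma isFiniteMeasure_of_mem_Hrep (hμ : μ ∈ Mset d m) {Q : Measure (Euc d × Euc d)}
    (hQ : Q ∈ Hrep m μ ν) : IsFiniteMeasure Q := by
  refine ⟨?_⟩
  rw [← Measure.fst_univ, (mem_Hrep_iff.1 hQ).1, Measure.smul_apply, hμ, smul_eq_mul]
  exact ENNReal.mul_lt_top ENNReal.ofReal_lt_top ENNReal.ofReal_lt_top

lemma prod_mem_Hrep (hμ : μ ∈ Mset d m) (hν : ν ∈ Mset d m) : μ.prod ν ∈ Hrep m μ ν := by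
  have : IsFiniteMeasure ν := isFiniteMeasure_of_mem_Mset hν
  rw [mem_Hrep_iff, Measure.fst, Measure.snd, Measure.map_fst_prod, Measure.map_snd_prod, hμ, hν]
  exact ⟨rfl, rfl⟩

lemma Hrep_nonempty (hμ : μ ∈ Mset d m) (hν : ν ∈ Mset d m) : (Hrep m μ ν).Nonempty :=
  ⟨_, prod_mem_Hrep hμ hν⟩

lemma map_swap_mem_Hrep {Q : Measure (Euc d × Euc d)} (hQ : Q ∈ Hrep m μ ν) :
    Q.map Prod.swap ∈ Hrep m ν μ := by
  rw [mem_Hrep_iff] at hQ ⊢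
  rw [Measure.fst_map_swap, Measure.snd_map_swap]
  exact hQ.symm

lemma map_diag_mem_Hrep : (ENNReal.ofReal m • μ).map (fun x => (x, x)) ∈ Hrep m μ μ := by
  rw [mem_Hrep_iff, Measure.fst_map_prodMk (X := fun x => x) measurable_id',
    Measure.snd_map_prodMk (Y := fun x => x) measurable_id', Measure.map_id']
  exact ⟨rfl, rfl⟩

end Hrep

section Wasserstein

variable {p m : ℝ} {μ ν η : Measure (Euc d)}

lemma exists_mem_Hrep_transportCost_rpow_inv_le (hp : 1 ≤ p) (hμ : μ ∈ Mset d m)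
    (hν : ν ∈ Mset d m) {Q₁ Q₂ : Measure (Euc d × Euc d)} (hQ₁ : Q₁ ∈ Hrep m μ ν)
    (hQ₂ : Q₂ ∈ Hrep m ν η) :
    ∃ Q ∈ Hrep m μ η, transportCost p Q ^ (1 / p) ≤
      transportCost p Q₁ ^ (1 / p) + transportCost p Q₂ ^ (1 / p) := by
  have := isFiniteMeasure_of_mem_Hrep hμ hQ₁
  have := isFiniteMeasure_of_mem_Hrep hν hQ₂
  rw [mem_Hrep_iff] at hQ₁ hQ₂
  obtain ⟨R, hR, hR₁, hR₂⟩ := Measure.exists_gluing Q₁ Q₂ (hQ₁.2.trans hQ₂.1.symm)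
  refine ⟨R.map fun w => (w.1.1, w.2), mem_Hrep_iff.2 ⟨?_, ?_⟩, ?_⟩
  · rw [← hQ₁.1, ← hR₁, Measure.fst_map_prodMk (by fun_prop), Measure.fst, Measure.fst,
      Measure.map_map measurable_fst measurable_fst]
    rfl
  · rw [← hQ₂.2, ← hR₂, Measure.snd_map_prodMk (by fun_prop),
      Measure.snd_map_prodMk (by fun_prop)]
  · rw [← hR₁, ← hR₂]
    exact transportCost_map_rpow_inv_le hp R

lemma sInf_transportCost_nonneg : 0 ≤ sInf (transportCost p '' Hrep m μ ν) :=
  Real.sInf_nonneg (by rintro _ ⟨Q, -, rfl⟩; exact transportCost_nonneg Q)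

lemma Wp_nonneg : 0 ≤ Wp p m μ ν := Real.rpow_nonneg sInf_transportCost_nonneg _

lemma Wp_le_transportCost_rpow_inv (hp : 0 ≤ p) {Q : Measure (Euc d × Euc d)}
    (hQ : Q ∈ Hrep m μ ν) : Wp p m μ ν ≤ transportCost p Q ^ (1 / p) :=
  Real.rpow_le_rpow sInf_transportCost_nonneg
    (csInf_le ⟨0, by rintro _ ⟨Q, -, rfl⟩; exact transportCost_nonneg Q⟩ ⟨Q, hQ, rfl⟩)
    (by positivity)

lemma exists_transportCost_rpow_inv_lt (hp : 0 < p) (hμ : μ ∈ Mset d m) (hν : ν ∈ Mset d m)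
    {ε : ℝ} (hε : 0 < ε) :
    ∃ Q ∈ Hrep m μ ν, transportCost p Q ^ (1 / p) < Wp p m μ ν + ε := by
  have hW : 0 ≤ Wp p m μ ν := Wp_nonneg
  have hWε : 0 < Wp p m μ ν + ε := by linarith
  have hlt : sInf (transportCost p '' Hrep m μ ν) < (Wp p m μ ν + ε) ^ p := by
    rw [← Real.rpow_inv_lt_iff_of_pos sInf_transportCost_nonneg hWε.le hp, ← one_div,
      ← Wp_eq_sInf_transportCost]
    linarith
  obtain ⟨_, ⟨Q, hQ, rfl⟩, hQlt⟩ :=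
    exists_lt_of_csInf_lt ((Hrep_nonempty hμ hν).image _) hlt
  refine ⟨Q, hQ, ?_⟩
  rwa [one_div, Real.rpow_inv_lt_iff_of_pos (transportCost_nonneg Q) hWε.le hp]

lemma Wp_comm (p m : ℝ) (μ ν : Measure (Euc d)) : Wp p m μ ν = Wp p m ν μ := by
  have key (μ ν : Measure (Euc d)) :
      transportCost p '' Hrep m μ ν ⊆ transportCost p '' Hrep m ν μ := by
    rintro _ ⟨Q, hQ, rfl⟩
    exact ⟨Q.map Prod.swap, map_swap_mem_Hrep hQ, transportCost_map_swap Q⟩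
  rw [Wp_eq_sInf_transportCost, Wp_eq_sInf_transportCost, (key μ ν).antisymm (key ν μ)]

lemma Wp_self (hp : 0 < p) (m : ℝ) (μ : Measure (Euc d)) : Wp p m μ μ = 0 := by
  refine le_antisymm ?_ Wp_nonneg
  calc Wp p m μ μ ≤ transportCost p ((ENNReal.ofReal m • μ).map fun x => (x, x)) ^ (1 / p) :=
        Wp_le_transportCost_rpow_inv hp.le map_diag_mem_Hrep
    _ = 0 := by rw [transportCost_map_diag hp.ne', Real.zero_rpow (by positivity)]

lemma Wp_triangle (hp : 1 ≤ p) (hμ : μ ∈ Mset d m) (hν : ν ∈ Mset d m) (hη : η ∈ Mset d m) :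
    Wp p m μ η ≤ Wp p m μ ν + Wp p m ν η := by
  have hp0 : 0 < p := zero_lt_one.trans_le hp
  refine le_of_forall_pos_lt_add fun ε hε => ?_
  obtain ⟨Q₁, hQ₁, h₁⟩ := exists_transportCost_rpow_inv_lt hp0 hμ hν (half_pos hε)
  obtain ⟨Q₂, hQ₂, h₂⟩ := exists_transportCost_rpow_inv_lt hp0 hν hη (half_pos hε)
  obtain ⟨Q, hQ, hle⟩ := exists_mem_Hrep_transportCost_rpow_inv_le hp hμ hν hQ₁ hQ₂
  linarith [Wp_le_transportCost_rpow_inv hp0.le hQ]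

lemma exists_mem_Hrep_measure_le_dist_le (hp : 0 < p) (hμ : μ ∈ Mset d m) (hν : ν ∈ Mset d m)
    (h : Wp p m μ ν = 0) {e : ℝ} (he₀ : 0 < e) (he₁ : e ≤ 1) :
    ∃ Q ∈ Hrep m μ ν, Q {z | e ≤ dist z.1 z.2} ≤ ENNReal.ofReal e := by
  have hep : 0 < e ^ p := Real.rpow_pos_of_pos he₀ p
  have hS : sInf (transportCost p '' Hrep m μ ν) < e ^ p * e := by
    rw [Wp_eq_sInf_transportCost, Real.rpow_eq_zero sInf_transportCost_nonneg (by positivity)] at h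
    rw [h]
    positivity
  obtain ⟨_, ⟨Q, hQ, rfl⟩, hQlt⟩ :=
    exists_lt_of_csInf_lt ((Hrep_nonempty hμ hν).image _) hS
  have := isFiniteMeasure_of_mem_Hrep hμ hQ
  refine ⟨Q, hQ, ?_⟩
  simp_rw [← le_rho_iff he₁]
  exact (measure_le_rho_le hp Q he₀).trans
    (ENNReal.ofReal_le_ofReal ((div_le_iff₀' hep).2 hQlt.le))

lemma eq_of_Wp_eq_zero (hp : 0 < p) (hμ : μ ∈ Mset d m) (hν : ν ∈ Mset d m)
    (h : Wp p m μ ν = 0) : μ = ν := by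
  rcases eq_or_ne (ENNReal.ofReal m) 0 with hm | hm
  · -- `m ≤ 0`: both measures have total mass `0`
    rw [Measure.measure_univ_eq_zero.1 ((hμ : μ univ = _).trans hm),
      Measure.measure_univ_eq_zero.1 ((hν : ν univ = _).trans hm)]
  have := isFiniteMeasure_of_mem_Mset hμ
  have := isFiniteMeasure_of_mem_Mset hν
  have := μ.smul_finite (ENNReal.ofReal_ne_top (r := m))
  have := ν.smul_finite (ENNReal.ofReal_ne_top (r := m))
  have hLP : levyProkhorovEDist (ENNReal.ofReal m • μ) (ENNReal.ofReal m • ν) = 0 := by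
    refine le_antisymm (ENNReal.le_of_forall_pos_le_add fun ε hε _ => ?_) zero_le
    obtain ⟨Q, hQ, hQe⟩ := exists_mem_Hrep_measure_le_dist_le hp hμ hν h
      (lt_min hε zero_lt_one) (min_le_right _ _)
    rw [mem_Hrep_iff] at hQ
    rw [← hQ.1, ← hQ.2, zero_add]
    exact (levyProkhorovEDist_fst_snd_le Q hQe).trans
      (ENNReal.ofReal_le_of_le_toReal (min_le_left _ _))
  ext s
  simpa [ENNReal.mul_right_inj hm ENNReal.ofReal_ne_top] using
    congrArg (fun κ : Measure (Euc d) => κ s) (eq_of_levyProkhorovEDist_eq_zero hLP)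

end Wasserstein

section Gamma

variable {p m₁ m₂ : ℝ} {μ ν η : Measure (Euc d) × Measure (Euc d)}

lemma gammap_nonneg : 0 ≤ gammap p m₁ m₂ μ ν :=
  Real.rpow_nonneg (add_nonneg (Real.rpow_nonneg Wp_nonneg p) (Real.rpow_nonneg Wp_nonneg p)) _

lemma gammap_comm (p m₁ m₂ : ℝ) (μ ν : Measure (Euc d) × Measure (Euc d)) :
    gammap p m₁ m₂ μ ν = gammap p m₁ m₂ ν μ := by
  rw [gammap, gammap, Wp_comm p m₁ μ.1, Wp_comm p m₂ μ.2]

lemma gammap_triangle (hp : 1 ≤ p) (hμ : μ ∈ Mset d m₁ ×ˢ Mset d m₂)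
    (hν : ν ∈ Mset d m₁ ×ˢ Mset d m₂) (hη : η ∈ Mset d m₁ ×ˢ Mset d m₂) :
    gammap p m₁ m₂ μ η ≤ gammap p m₁ m₂ μ ν + gammap p m₁ m₂ ν η := by
  have hminkowski := Real.Lp_add_le_of_nonneg (s := Finset.univ) hp
    (f := ![Wp p m₁ μ.1 ν.1, Wp p m₂ μ.2 ν.2]) (g := ![Wp p m₁ ν.1 η.1, Wp p m₂ ν.2 η.2])
    (by simp [Fin.forall_fin_two, Wp_nonneg]) (by simp [Fin.forall_fin_two, Wp_nonneg])
  simp only [Fin.sum_univ_two, Matrix.cons_val_zero, Matrix.cons_val_one] at hminkowski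
  rw [gammap, gammap, gammap]
  refine le_trans ?_ hminkowski
  gcongr
  exacts [add_nonneg (Real.rpow_nonneg Wp_nonneg p) (Real.rpow_nonneg Wp_nonneg p), Wp_nonneg,
    Wp_triangle hp hμ.1 hν.1 hη.1, Wp_nonneg, Wp_triangle hp hμ.2 hν.2 hη.2]

lemma gammap_eq_zero_iff (hp : 0 < p) (hμ : μ ∈ Mset d m₁ ×ˢ Mset d m₂)
    (hν : ν ∈ Mset d m₁ ×ˢ Mset d m₂) : gammap p m₁ m₂ μ ν = 0 ↔ μ = ν := by
  refine ⟨fun h => ?_, ?_⟩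
  · have hpow (m : ℝ) (μ ν : Measure (Euc d)) : 0 ≤ Wp p m μ ν ^ p := Real.rpow_nonneg Wp_nonneg p
    rw [gammap, Real.rpow_eq_zero (add_nonneg (hpow _ _ _) (hpow _ _ _)) (by positivity),
      add_eq_zero_iff_of_nonneg (hpow _ _ _) (hpow _ _ _), Real.rpow_eq_zero Wp_nonneg hp.ne',
      Real.rpow_eq_zero Wp_nonneg hp.ne'] at h
    exact Prod.ext (eq_of_Wp_eq_zero hp hμ.1 hν.1 h.1) (eq_of_Wp_eq_zero hp hμ.2 hν.2 h.2)
  · rintro rfl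
    simp [gammap, Wp_self hp, Real.zero_rpow hp.ne', Real.zero_rpow (inv_ne_zero hp.ne')]

end Gamma

theorem gammap_is_metric_general {d : ℕ} (p m₁ m₂ : ℝ) (hp : 1 ≤ p)
    (μ ν η : Measure (Euc d) × Measure (Euc d))
    (hμ : μ.1 ∈ Mset d m₁ ∧ μ.2 ∈ Mset d m₂)
    (hν : ν.1 ∈ Mset d m₁ ∧ ν.2 ∈ Mset d m₂)
    (hη : η.1 ∈ Mset d m₁ ∧ η.2 ∈ Mset d m₂) :
    0 ≤ gammap p m₁ m₂ μ ν ∧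
    gammap p m₁ m₂ μ ν = gammap p m₁ m₂ ν μ ∧
    gammap p m₁ m₂ μ η ≤ gammap p m₁ m₂ μ ν + gammap p m₁ m₂ ν η ∧
    (gammap p m₁ m₂ μ ν = 0 ↔ μ = ν) :=
  ⟨gammap_nonneg, gammap_comm p m₁ m₂ μ ν, gammap_triangle hp hμ hν hη,
    gammap_eq_zero_iff (zero_lt_one.trans_le hp) hμ hν⟩

/-- `γ_p` is a metric on `M(m₁,m₂)`. -/
theorem gammap_is_metric {d : ℕ} (hd : 1 ≤ d) (p m₁ m₂ : ℝ) (hp : 1 ≤ p)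
    (hm₁ : 0 < m₁) (hm₂ : 0 < m₂)
    (μ ν η : Measure (Euc d) × Measure (Euc d))
    (hμ : μ.1 ∈ Mset d m₁ ∧ μ.2 ∈ Mset d m₂)
    (hν : ν.1 ∈ Mset d m₁ ∧ ν.2 ∈ Mset d m₂)
    (hη : η.1 ∈ Mset d m₁ ∧ η.2 ∈ Mset d m₂) :
    0 ≤ gammap p m₁ m₂ μ ν ∧
    gammap p m₁ m₂ μ ν = gammap p m₁ m₂ ν μ ∧
    gammap p m₁ m₂ μ η ≤ gammap p m₁ m₂ μ ν + gammap p m₁ m₂ ν η ∧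
    (gammap p m₁ m₂ μ ν = 0 ↔ μ = ν) :=
  gammap_is_metric_general p m₁ m₂ hp μ ν η hμ hν hη
end
end

section
/- Let C > 0 and let h : ℝ → ℝ be twice continuously differentiable with h'(0) = 0 and |h''(s)| ≤ C for all s ∈ ℝ. Define K : ℝ² → ℝ² by K(0) = 0 and, for r = (r₁,r₂) ≠ 0, K(r) = h'(‖r‖)·(−r₂, r₁)/‖r‖, where ‖·‖ is the Euclidean norm (so K = ∇⊥g for g(r) = h(‖r‖), with ∇⊥ = (−∂/∂r₂, ∂/∂r₁)). Then K is Lipschitz with constant 2C: ‖K(r) − K(q)‖ ≤ 2C‖r − q‖ for all r, q ∈ ℝ². In particular, K is continuous on all of ℝ². -/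
/-!
`K` is the rotation by a right angle of the radial field `v ↦ (f ‖v‖ / ‖v‖) • v` with `f = h'`,
and `f` is `C`-Lipschitz with `f 0 = 0`. For `‖w‖ ≤ ‖v‖` the difference of the radial field at
`v` and `w` splits into a radial part `((f ‖v‖ - f ‖w‖) / ‖v‖) • v`, of norm at most
`C |‖v‖ - ‖w‖|`, and an angular part `(f ‖w‖ / ‖w‖) • ((‖w‖ / ‖v‖) • v - w)`, whose scalar is at
most `C` and whose vector is no longer than `v - w`: pulling `v` radially onto the sphere through
`w` does not increase its distance to `w`.
-/

open Set

noncomputable section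

/-- `ℝ²` with the Euclidean norm. -/
abbrev Euc2 := EuclideanSpace ℝ (Fin 2)

open scoped NNReal

section Radial

variable {E : Type*} [NormedAddCommGroup E] [InnerProductSpace ℝ E]

/-- By `0 / 0 = 0`, this is `0` at `v = 0`. -/
def radialMap (f : ℝ → ℝ) (v : E) : E := (f ‖v‖ / ‖v‖) • v

theorem norm_div_norm_smul_sub_le {v w : E} (hwv : ‖w‖ ≤ ‖v‖) :
    ‖(‖w‖ / ‖v‖) • v - w‖ ≤ ‖v - w‖ := by
  rcases (norm_nonneg v).eq_or_lt with hv | hv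
  · have hw : w = 0 := norm_le_zero_iff.mp (hv ▸ hwv)
    simp [hw]
  set a := ‖v‖
  set b := ‖w‖
  have hba : b / a ≤ 1 := div_le_one_of_le₀ hwv hv.le
  have hinner : (1 - b / a) * inner ℝ v w ≤ (1 - b / a) * (a * b) :=
    mul_le_mul_of_nonneg_left (real_inner_le_norm v w) (by linarith)
  -- `‖v - w‖² - ‖(b/a) v - w‖² = a² - b² - 2(1 - b/a)⟪v, w⟫ ≥ (a - b)²`
  have hsq : ‖(b / a) • v - w‖ ^ 2 ≤ ‖v - w‖ ^ 2 := by
    rw [norm_sub_sq_real, norm_sub_sq_real, real_inner_smul_left, norm_smul, Real.norm_eq_abs,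
      abs_of_nonneg (by positivity), div_mul_cancel₀ _ hv.ne']
    nlinarith [div_mul_cancel₀ b hv.ne', sq_nonneg (a - b)]
  exact (sq_le_sq₀ (norm_nonneg _) (norm_nonneg _)).mp hsq

variable {f : ℝ → ℝ} {C : ℝ≥0}

theorem abs_div_le_of_lipschitzOnWith (hf : LipschitzOnWith C f (Ici 0)) (hf0 : f 0 = 0)
    {s : ℝ} (hs : 0 ≤ s) : |f s / s| ≤ C := by
  rcases hs.eq_or_lt with rfl | hs
  · simp
  have := hf.dist_le_mul s hs.le 0 self_mem_Ici
  rw [Real.dist_eq, Real.dist_eq, hf0, sub_zero, sub_zero, abs_of_pos hs] at this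
  rw [abs_div, abs_of_pos hs]
  exact div_le_of_le_mul₀ hs.le C.2 this

theorem norm_radialMap_sub_le_of_norm_le (hf : LipschitzOnWith C f (Ici 0)) (hf0 : f 0 = 0)
    {v w : E} (hwv : ‖w‖ ≤ ‖v‖) :
    ‖radialMap f v - radialMap f w‖ ≤ 2 * C * ‖v - w‖ := by
  rcases (norm_nonneg v).eq_or_lt with hv | hv
  · have hw : w = 0 := norm_le_zero_iff.mp (hv ▸ hwv)
    simp [norm_eq_zero.mp hv.symm, hw, radialMap]
  set a := ‖v‖
  set b := ‖w‖
  have hb : 0 ≤ b := norm_nonneg w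
  have hsplit : radialMap f v - radialMap f w
      = ((f a - f b) / a) • v + (f b / b) • ((b / a) • v - w) := by
    rcases hb.eq_or_lt with hb0 | hb0
    · simp [radialMap, a, b, norm_eq_zero.mp hb0.symm, hf0]
    · change (f a / a) • v - (f b / b) • w = _
      rw [smul_sub, smul_smul, div_mul_div_cancel₀ hb0.ne', sub_div, sub_smul]
      abel
  have hradial : ‖((f a - f b) / a) • v‖ ≤ C * ‖v - w‖ := by
    rw [norm_smul, Real.norm_eq_abs, abs_div, abs_of_pos hv, div_mul_cancel₀ _ hv.ne']
    calc |f a - f b| ≤ C * |a - b| := by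
          simpa only [Real.dist_eq] using hf.dist_le_mul a hv.le b hb
      _ ≤ C * ‖v - w‖ := mul_le_mul_of_nonneg_left (abs_norm_sub_norm_le v w) C.2
  have hangular : ‖(f b / b) • ((b / a) • v - w)‖ ≤ C * ‖v - w‖ := by
    rw [norm_smul, Real.norm_eq_abs]
    exact mul_le_mul (abs_div_le_of_lipschitzOnWith hf hf0 hb)
      (norm_div_norm_smul_sub_le hwv) (norm_nonneg _) C.2
  calc ‖radialMap f v - radialMap f w‖
      ≤ ‖((f a - f b) / a) • v‖ + ‖(f b / b) • ((b / a) • v - w)‖ :=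
        hsplit ▸ norm_add_le _ _
    _ ≤ 2 * C * ‖v - w‖ := by linarith

theorem lipschitzWith_radialMap (hf : LipschitzOnWith C f (Ici 0)) (hf0 : f 0 = 0) :
    LipschitzWith (2 * C) (radialMap f : E → E) := by
  refine LipschitzWith.of_dist_le_mul fun v w => ?_
  rw [dist_eq_norm, dist_eq_norm]
  rcases le_total ‖w‖ ‖v‖ with hwv | hvw
  · exact_mod_cast norm_radialMap_sub_le_of_norm_le hf hf0 hwv
  · rw [norm_sub_rev, norm_sub_rev v]
    exact_mod_cast norm_radialMap_sub_le_of_norm_le hf hf0 hvw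

end Radial

def rot90 : Euc2 →ₗᵢ[ℝ] Euc2 where
  toFun v := !₂[-v 1, v 0]
  map_add' v w := by ext i; fin_cases i <;> simp [add_comm]
  map_smul' c v := by ext i; fin_cases i <;> simp
  norm_map' v := by simp [EuclideanSpace.norm_eq, Fin.sum_univ_two, add_comm]

theorem regularized_kernel_lipschitz_general (C : ℝ)
    (h : ℝ → ℝ) (hh : ContDiff ℝ 2 h)
    (h'0 : deriv h 0 = 0) (h''bd : ∀ s : ℝ, |deriv (deriv h) s| ≤ C)
    (K : Euc2 → Euc2) (hK0 : K 0 = 0)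
    (hK : ∀ r : Euc2, r ≠ 0 →
      K r 0 = deriv h ‖r‖ * (-(r 1)) / ‖r‖ ∧ K r 1 = deriv h ‖r‖ * (r 0) / ‖r‖) :
    ∀ r q : Euc2, ‖K r - K q‖ ≤ 2 * C * ‖r - q‖ := by
  lift C to ℝ≥0 using (abs_nonneg _).trans (h''bd 0)
  have hlip : LipschitzWith C (deriv h) :=
    lipschitzWith_of_nnnorm_deriv_le hh.differentiable_deriv_two fun s => by
      rw [← NNReal.coe_le_coe, coe_nnnorm, Real.norm_eq_abs]
      exact h''bd s
  have hKeq : K = rot90 ∘ radialMap (deriv h) := by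
    funext r
    by_cases hr : r = 0
    · simp [hr, hK0, radialMap]
    ext i
    fin_cases i
    · simp [rot90, radialMap, (hK r hr).1, div_mul_eq_mul_div, neg_div]
    · simp [rot90, radialMap, (hK r hr).2, div_mul_eq_mul_div]
  intro r q
  have := (rot90.lipschitz.comp (lipschitzWith_radialMap hlip.lipschitzOnWith h'0)).dist_le_mul
    r q
  simpa [hKeq, dist_eq_norm] using this

/-- the regularized Biot–Savart kernel `K = ∇⊥g`, with `g(r) = h(‖r‖)`,
`h` twice continuously differentiable, `h'(0) = 0` and `|h''| ≤ C`, is Lipschitz with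
constant `2C` (in particular continuous on all of `ℝ²`). Explicitly, `K(0) = 0` and
`K(r) = h'(‖r‖)·(−r₂, r₁)/‖r‖` for `r ≠ 0`. -/
theorem regularized_kernel_lipschitz (C : ℝ) (hC : 0 < C)
    (h : ℝ → ℝ) (hh : ContDiff ℝ 2 h)
    (h'0 : deriv h 0 = 0) (h''bd : ∀ s : ℝ, |deriv (deriv h) s| ≤ C)
    (K : Euc2 → Euc2) (hK0 : K 0 = 0)
    (hK : ∀ r : Euc2, r ≠ 0 →
      K r 0 = deriv h ‖r‖ * (-(r 1)) / ‖r‖ ∧ K r 1 = deriv h ‖r‖ * (r 0) / ‖r‖) :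
    ∀ r q : Euc2, ‖K r - K q‖ ≤ 2 * C * ‖r - q‖ :=
  regularized_kernel_lipschitz_general C h hh h'0 h''bd K hK0 hK
end
end
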